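/- Let 0 < γ < β ≤ 1, θ > 0, A > 0, δ = γ/β, and Φ(t,s) = exp( -θA(1-s)^{γ-β}(B(t,s)^{1-δ}-1)/(1-δ) ) with B(t,s) = 1 + t(1-s)^β/A. With normalization z = z(t) = (A/t)^{1/β}, for every λ > 0, lim_{t→∞} Φ(t, e^{-λz}) = 0. -/

import Mathlib

open Real Filter Topology

/-! Since `1 - e^{-λz} ~ λz` and `z^β = A/t`, the quantity `B(t, e^{-λz})` converges to
`1 + λ^β`, so the last factor of the exponent has a positive limit. The factor
`(1 - s)^{γ-β}` blows up because `γ < β`, hence the exponent tends to `-∞`. -/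

theorem tendsto_one_sub_exp_neg_mul_div (lam : ℝ) :
    Tendsto (fun x => (1 - exp (-lam * x)) / x) (𝓝[≠] 0) (𝓝 lam) := by
  have hd : HasDerivAt (fun x => 1 - exp (-lam * x)) lam 0 := by
    simpa using (((hasDerivAt_id (0 : ℝ)).const_mul (-lam)).exp.const_sub 1)
  refine (hasDerivAt_iff_tendsto_slope.mp hd).congr fun x => ?_
  simp [slope_def_field]

theorem tendsto_one_sub_exp_neg_mul_nhdsGT_zero {lam : ℝ} (hlam : 0 < lam) :
    Tendsto (fun x => 1 - exp (-lam * x)) (𝓝[>] 0) (𝓝[>] 0) := by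
  refine tendsto_nhdsWithin_iff.mpr ⟨?_, ?_⟩
  · have : Continuous fun x => 1 - exp (-lam * x) := by fun_prop
    simpa using this.continuousWithinAt.tendsto (s := Set.Ioi 0) (x := 0)
  · filter_upwards [self_mem_nhdsWithin] with x (hx : 0 < x)
    simpa [sub_pos] using mul_pos hlam hx

theorem tendsto_div_rpow_atTop_nhdsGT_zero {A p : ℝ} (hA : 0 < A) (hp : 0 < p) :
    Tendsto (fun t => (A / t) ^ p) atTop (𝓝[>] 0) := by
  refine tendsto_nhdsWithin_iff.mpr ⟨?_, ?_⟩
  · simpa [zero_rpow hp.ne'] using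
      ((tendsto_const_nhds (x := A)).div_atTop tendsto_id).rpow_const (Or.inr hp.le)
  · filter_upwards [eventually_gt_atTop 0] with t ht
    exact rpow_pos_of_pos (div_pos hA ht) p

theorem one_add_mul_rpow_div_eq {A t x β : ℝ} (hA : 0 < A) (ht : 0 < t) (hx : 0 ≤ x)
    (hβ : β ≠ 0) : 1 + t * x ^ β / A = 1 + (x / (A / t) ^ (1 / β)) ^ β := by
  rw [div_rpow hx (by positivity), ← rpow_mul (by positivity), one_div_mul_cancel hβ, rpow_one]
  field_simp

theorem tendsto_rpow_neg_mul_atTop {α : Type*} {l : Filter α} {f g : α → ℝ} {p c : ℝ}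
    (hp : p < 0) (hc : 0 < c) (hf : Tendsto f l (𝓝[>] 0)) (hg : Tendsto g l (𝓝 c)) :
    Tendsto (fun x => f x ^ p * g x) l atTop :=
  ((tendsto_rpow_neg_nhdsGT_zero hp).comp hf).atTop_mul_pos hc hg

theorem degenerate_limit_strong_normalization_general
    (β γ θ A δ : ℝ) (hγ : 0 < γ) (hγβ : γ < β)
    (hθ : 0 < θ) (hA : 0 < A) (hδ : δ = γ / β)
    (B Φ : ℝ → ℝ → ℝ)
    (hB : ∀ t s, B t s = 1 + t * (1 - s) ^ β / A)
    (hΦ : ∀ t s, Φ t s = Real.exp (-(θ * A) * (1 - s) ^ (γ - β) * ((B t s ^ (1 - δ) - 1) / (1 - δ)))) :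
    ∀ lam : ℝ, 0 < lam →
      Tendsto (fun t : ℝ => Φ t (Real.exp (-lam * (A / t) ^ (1 / β))))
        atTop (nhds 0) := by
  intro lam hlam
  have hβ : 0 < β := hγ.trans hγβ
  have hδ1 : 0 < 1 - δ := by rwa [hδ, sub_pos, div_lt_one hβ]
  set z := fun t : ℝ => (A / t) ^ (1 / β)
  have hz : Tendsto z atTop (𝓝[>] 0) := tendsto_div_rpow_atTop_nhdsGT_zero hA (by positivity)
  have hgap : Tendsto (fun t => 1 - exp (-lam * z t)) atTop (𝓝[>] 0) :=
    (tendsto_one_sub_exp_neg_mul_nhdsGT_zero hlam).comp hz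
  have hslope : Tendsto (fun t => (1 - exp (-lam * z t)) / z t) atTop (𝓝 lam) :=
    (tendsto_one_sub_exp_neg_mul_div lam).comp
      (hz.mono_right (nhdsWithin_mono 0 fun _ hx => ne_of_gt hx))
  have hBlim : Tendsto (fun t => B t (exp (-lam * z t))) atTop (𝓝 (1 + lam ^ β)) := by
    refine (tendsto_const_nhds.add (hslope.rpow_const (Or.inl hlam.ne'))).congr' ?_
    filter_upwards [eventually_gt_atTop 0, hgap.eventually eventually_mem_nhdsWithin]
      with t ht hgt
    rw [hB, one_add_mul_rpow_div_eq hA ht (Set.mem_Ioi.mp hgt).le hβ.ne']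
  have hc : 0 < ((1 + lam ^ β) ^ (1 - δ) - 1) / (1 - δ) :=
    div_pos (sub_pos.mpr (one_lt_rpow (by simpa using rpow_pos_of_pos hlam β) hδ1)) hδ1
  have hexponent := (tendsto_rpow_neg_mul_atTop (sub_neg.mpr hγβ) hc hgap
    (((hBlim.rpow_const (Or.inl (by positivity))).sub_const 1).div_const (1 - δ))).const_mul_atTop
    (mul_pos hθ hA)
  refine (tendsto_exp_atBot.comp (tendsto_neg_atTop_atBot.comp hexponent)).congr fun t => ?_
  simp only [Function.comp_apply, hΦ, z]
  ring_nf

theorem degenerate_limit_strong_normalization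
    (β γ θ A δ : ℝ) (hγ : 0 < γ) (hγβ : γ < β) (hβ1 : β ≤ 1)
    (hθ : 0 < θ) (hA : 0 < A) (hδ : δ = γ / β)
    (B Φ : ℝ → ℝ → ℝ)
    (hB : ∀ t s, B t s = 1 + t * (1 - s) ^ β / A)
    (hΦ : ∀ t s, Φ t s = Real.exp (-(θ * A) * (1 - s) ^ (γ - β) * ((B t s ^ (1 - δ) - 1) / (1 - δ)))) :
    ∀ lam : ℝ, 0 < lam →
      Tendsto (fun t : ℝ => Φ t (Real.exp (-lam * (A / t) ^ (1 / β))))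
        atTop (nhds 0) :=
  degenerate_limit_strong_normalization_general β γ θ A δ hγ hγβ hθ hA hδ B Φ hB hΦ
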